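/- For clusters i = 1,…,N, let D_i be a real n_i × p matrix and V_i a real symmetric invertible n_i × n_i matrix; set A_i = D_iᵀ V_i⁻¹ D_i, I₀ = Σ_i A_i (assumed invertible), Δ = I₀⁻¹, H_{il} = D_i Δ D_lᵀ V_l⁻¹, and H_{ii} = D_i Δ D_iᵀ V_i⁻¹. Let e_1,…,e_N be independent random vectors on a probability space, e_i taking values in ℝ^{n_i}, with E[e_i] = 0, square-integrable components, and E[e_i e_iᵀ] = V_i. Define r_i = (I − H_{ii}) e_i − Σ_{l ≠ i} H_{il} e_l and the uncorrected score contribution d_i = D_iᵀ V_i⁻¹ r_i. Then E[d_i d_iᵀ] = A_i − A_i Δ A_i for every i, and consequently Σ_{i=1}^N E[d_i d_iᵀ] = I₀ − Σ_{i=1}^N A_i Δ A_i. -/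

import Mathlib

open scoped Matrix
open Finset MeasureTheory ProbabilityTheory

/-!
With `B_l = D_lᵀ V_l⁻¹` one has `B_i H_{il} = A_i Δ B_l`, so the score is a sum of independent
pieces, `d_i = Σ_l (δ_{il} - A_i Δ) B_l e_l`. Cross terms between different clusters vanish by
independence and centring, and `E[(B_l e_l)(B_l e_l)ᵀ] = B_l V_l B_lᵀ = A_l`, hence
`E[d_i d_iᵀ] = Σ_l (δ_{il} - A_i Δ) A_l (δ_{il} - Δ A_i) = A_i - 2 A_i Δ A_i + A_i Δ I₀ Δ A_i`,
and `Δ I₀ = 1`.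
-/

section CrossMoment

variable {Ω : Type*} [MeasurableSpace Ω] {μ : Measure Ω} {m n m' n' : Type*}

noncomputable def crossMoment (μ : Measure Ω) (X : Ω → m → ℝ) (Y : Ω → n → ℝ) : Matrix m n ℝ :=
  Matrix.of fun s t => ∫ ω, X ω s * Y ω t ∂μ

lemma memLp_mulVec_apply [Fintype n] {q : ENNReal} {X : Ω → n → ℝ}
    (hX : ∀ j, MemLp (fun ω => X ω j) q μ) (P : Matrix m n ℝ) (s : m) :
    MemLp (fun ω => (P *ᵥ X ω) s) q μ := by
  simpa only [Matrix.mulVec, dotProduct] using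
    memLp_finsetSum univ fun j _ => (hX j).const_mul (P s j)

lemma crossMoment_sum_left {ι : Type*} (S : Finset ι) {X : ι → Ω → m → ℝ} {Y : Ω → n → ℝ}
    (hXY : ∀ i ∈ S, ∀ s t, Integrable (fun ω => X i ω s * Y ω t) μ) :
    crossMoment μ (fun ω => ∑ i ∈ S, X i ω) Y = ∑ i ∈ S, crossMoment μ (X i) Y := by
  ext s t
  simp only [crossMoment, Matrix.of_apply, Matrix.sum_apply, Finset.sum_apply, Finset.sum_mul]
  exact integral_finsetSum S fun i hi => hXY i hi s t

lemma crossMoment_sum_right {ι : Type*} (S : Finset ι) {X : Ω → m → ℝ} {Y : ι → Ω → n → ℝ}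
    (hXY : ∀ i ∈ S, ∀ s t, Integrable (fun ω => X ω s * Y i ω t) μ) :
    crossMoment μ X (fun ω => ∑ i ∈ S, Y i ω) = ∑ i ∈ S, crossMoment μ X (Y i) := by
  ext s t
  simp only [crossMoment, Matrix.of_apply, Matrix.sum_apply, Finset.sum_apply, Finset.mul_sum]
  exact integral_finsetSum S fun i hi => hXY i hi s t

lemma crossMoment_mulVec_mulVec [Fintype m] [Fintype n] {X : Ω → m → ℝ} {Y : Ω → n → ℝ}
    (hX : ∀ j, MemLp (fun ω => X ω j) 2 μ) (hY : ∀ j, MemLp (fun ω => Y ω j) 2 μ)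
    (P : Matrix m' m ℝ) (Q : Matrix n' n ℝ) :
    crossMoment μ (fun ω => P *ᵥ X ω) (fun ω => Q *ᵥ Y ω) = P * crossMoment μ X Y * Qᵀ := by
  ext s t
  have hint : ∀ a b, Integrable (fun ω => X ω a * Y ω b) μ := fun a b =>
    (hX a).integrable_mul (hY b)
  have hexpand : ∀ ω, (P *ᵥ X ω) s * (Q *ᵥ Y ω) t
      = ∑ a, ∑ b, P s a * Q t b * (X ω a * Y ω b) := fun ω => by
    simp only [Matrix.mulVec, dotProduct, Finset.sum_mul_sum]
    exact Finset.sum_congr rfl fun a _ => Finset.sum_congr rfl fun b _ => by ring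
  simp only [crossMoment, Matrix.of_apply, hexpand, Matrix.mul_apply, Matrix.transpose_apply,
    Finset.sum_mul]
  rw [integral_finsetSum _ fun a _ => integrable_finsetSum _ fun b _ =>
    (hint a b).const_mul (P s a * Q t b), Finset.sum_comm]
  refine Finset.sum_congr rfl fun a _ => ?_
  rw [integral_finsetSum _ fun b _ => (hint a b).const_mul (P s a * Q t b)]
  refine Finset.sum_congr rfl fun b _ => ?_
  rw [integral_const_mul]
  ring

lemma crossMoment_eq_zero_of_indepFun {X : Ω → m → ℝ} {Y : Ω → n → ℝ} (hXY : IndepFun X Y μ)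
    (hX : ∀ j, AEStronglyMeasurable (fun ω => X ω j) μ)
    (hY : ∀ j, AEStronglyMeasurable (fun ω => Y ω j) μ)
    (hX₀ : ∀ j, ∫ ω, X ω j ∂μ = 0) :
    crossMoment μ X Y = 0 := by
  ext s t
  have hst := hXY.comp (measurable_pi_apply s) (measurable_pi_apply t)
  simpa [crossMoment, Function.comp_def, hX₀] using
    hst.integral_fun_mul_eq_mul_integral (hX s) (hY t)

lemma crossMoment_sum_mulVec_sum_mulVec {ι : Type*} [Fintype ι] {κ : ι → Type*}
    [∀ i, Fintype (κ i)] {e : ∀ i, Ω → κ i → ℝ} (he : iIndepFun e μ)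
    (hL2 : ∀ i j, MemLp (fun ω => e i ω j) 2 μ) (h₀ : ∀ i j, ∫ ω, e i ω j ∂μ = 0)
    (C C' : ∀ i, Matrix m (κ i) ℝ) :
    crossMoment μ (fun ω => ∑ i, C i *ᵥ e i ω) (fun ω => ∑ i, C' i *ᵥ e i ω)
      = ∑ i, C i * crossMoment μ (e i) (e i) * (C' i)ᵀ := by
  have hsum : ∀ t, MemLp (fun ω => (∑ i, C' i *ᵥ e i ω) t) 2 μ := fun t => by
    simpa only [Finset.sum_apply] using
      memLp_finsetSum univ fun i _ => memLp_mulVec_apply (hL2 i) (C' i) t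
  rw [crossMoment_sum_left _ fun i _ s t =>
    (memLp_mulVec_apply (hL2 i) (C i) s).integrable_mul (hsum t)]
  refine Finset.sum_congr rfl fun i _ => ?_
  rw [crossMoment_sum_right _ fun j _ s t =>
    (memLp_mulVec_apply (hL2 i) (C i) s).integrable_mul (memLp_mulVec_apply (hL2 j) (C' j) t),
    Finset.sum_eq_single i (fun j _ hji => ?_) (by simp),
    crossMoment_mulVec_mulVec (hL2 i) (hL2 i)]
  rw [crossMoment_mulVec_mulVec (hL2 i) (hL2 j),
    crossMoment_eq_zero_of_indepFun (he.indepFun hji.symm) (fun a => (hL2 i a).1)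
      (fun b => (hL2 j b).1) (h₀ i), Matrix.mul_zero, Matrix.zero_mul]

end CrossMoment

section MatrixAlgebra

variable {ι R m n : Type*} [CommRing R]

lemma Matrix.IsSymm.transpose_mul_mul_same [Fintype n] {V : Matrix n n R} (hV : V.IsSymm)
    (D : Matrix n m R) : (Dᵀ * V * D).IsSymm := by
  simp only [Matrix.IsSymm, Matrix.transpose_mul, Matrix.transpose_transpose, hV.eq,
    Matrix.mul_assoc]

lemma Matrix.IsSymm.mul_inv_mul_mul_transpose_mul_inv [Fintype n] [DecidableEq n]
    {V : Matrix n n R} (hV : V.IsSymm) (hVdet : IsUnit V.det) (X : Matrix m n R) :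
    X * V⁻¹ * V * (X * V⁻¹)ᵀ = X * V⁻¹ * Xᵀ := by
  rw [Matrix.nonsing_inv_mul_cancel_right _ _ hVdet, Matrix.transpose_mul, hV.inv.eq,
    Matrix.mul_assoc]

lemma sum_single_one_sub_mul_mul_transpose [Fintype ι] [DecidableEq ι] [Fintype m]
    [DecidableEq m] (A : ι → Matrix m m R) (M : Matrix m m R) (i : ι) :
    ∑ l, (Pi.single i 1 l - M) * A l * (Pi.single i 1 l - M)ᵀ
      = A i - M * A i - A i * Mᵀ + M * (∑ l, A l) * Mᵀ := by
  simp only [sub_mul, mul_sub, Matrix.transpose_sub, Finset.sum_sub_distrib, Finset.mul_sum,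
    Finset.sum_mul, Pi.single_apply, ite_mul, mul_ite, one_mul, mul_one, zero_mul, mul_zero,
    Matrix.transpose_one, apply_ite Matrix.transpose, Matrix.transpose_zero, Finset.sum_ite_eq',
    Finset.mem_univ, if_true]
  abel

lemma sum_single_one_sub_mul_mul_transpose_eq_sub [Fintype ι] [DecidableEq ι] [Fintype m]
    [DecidableEq m] {A : ι → Matrix m m R} {Δ : Matrix m m R} (hA : ∀ l, (A l)ᵀ = A l)
    (hΔ : Δᵀ = Δ) (hΔA : Δ * ∑ l, A l = 1) (i : ι) :
    ∑ l, (Pi.single i 1 l - A i * Δ) * A l * (Pi.single i 1 l - A i * Δ)ᵀ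
      = A i - A i * Δ * A i := by
  rw [sum_single_one_sub_mul_mul_transpose, Matrix.transpose_mul, hΔ, hA,
    Matrix.mul_assoc (A i) Δ (∑ l, A l), hΔA, Matrix.mul_one]
  simp only [Matrix.mul_assoc]
  abel

lemma mulVec_one_sub_mulVec_sub_sum_erase [Fintype ι] [DecidableEq ι] [Fintype m]
    [DecidableEq m] {κ : ι → Type*} [∀ l, Fintype (κ l)] {i : ι} [DecidableEq (κ i)]
    {B : ∀ l, Matrix m (κ l) R} {H : ∀ l, Matrix (κ i) (κ l) R} {M : Matrix m m R}
    (hBH : ∀ l, B i * H l = M * B l) (x : ∀ l, κ l → R) :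
    B i *ᵥ ((1 - H i) *ᵥ x i - ∑ l ∈ univ.erase i, H l *ᵥ x l)
      = ∑ l, ((Pi.single i 1 l - M) * B l) *ᵥ x l := by
  have hsingle : ∑ l, ((Pi.single i 1 : ι → Matrix m m R) l * B l) *ᵥ x l = B i *ᵥ x i := by
    rw [Fintype.sum_eq_single i fun l hl => by simp [Pi.single_eq_of_ne hl]]
    simp
  have hres : (1 - H i) *ᵥ x i - ∑ l ∈ univ.erase i, H l *ᵥ x l = x i - ∑ l, H l *ᵥ x l := by
    rw [Matrix.sub_mulVec, Matrix.one_mulVec, ← Finset.add_sum_erase _ _ (mem_univ i), sub_sub]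
  rw [hres, Matrix.mulVec_sub, Matrix.mulVec_sum, ← hsingle, ← Finset.sum_sub_distrib]
  refine Finset.sum_congr rfl fun l _ => ?_
  rw [Matrix.mulVec_mulVec, hBH, Matrix.sub_mul, Matrix.sub_mulVec]

end MatrixAlgebra

theorem liang_zeger_middle_matrix_downward_bias_general
    {N p : ℕ} (n : Fin N → ℕ)
    (D : ∀ l, Matrix (Fin (n l)) (Fin p) ℝ)
    (V : ∀ l, Matrix (Fin (n l)) (Fin (n l)) ℝ)
    (hVsymm : ∀ l, (V l).IsSymm) (hVunit : ∀ l, IsUnit (V l))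
    (A : Fin N → Matrix (Fin p) (Fin p) ℝ)
    (hA : ∀ l, A l = (D l)ᵀ * (V l)⁻¹ * D l)
    (I₀ : Matrix (Fin p) (Fin p) ℝ) (hI₀ : I₀ = ∑ l, A l)
    (hI₀unit : IsUnit I₀)
    (Δ : Matrix (Fin p) (Fin p) ℝ) (hΔ : Δ = I₀⁻¹)
    (H : ∀ i l, Matrix (Fin (n i)) (Fin (n l)) ℝ)
    (hH : ∀ i l, H i l = D i * Δ * (D l)ᵀ * (V l)⁻¹)
    {Ω : Type*} [MeasurableSpace Ω] (μ : Measure Ω)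
    (e : ∀ i, Ω → Fin (n i) → ℝ)
    (hindep : iIndepFun e μ)
    (hL2 : ∀ i j, MemLp (fun ω => e i ω j) 2 μ)
    (hmean : ∀ i j, ∫ ω, e i ω j ∂μ = 0)
    (hcov : ∀ i, ∀ j k, ∫ ω, e i ω j * e i ω k ∂μ = V i j k)
    (r : ∀ i, Ω → Fin (n i) → ℝ)
    (hr : ∀ i ω, r i ω =
      (1 - H i i) *ᵥ e i ω - ∑ l ∈ univ.erase i, H i l *ᵥ e l ω)
    (d : ∀ i, Ω → Fin p → ℝ)
    (hd : ∀ i ω, d i ω = ((D i)ᵀ * (V i)⁻¹) *ᵥ r i ω) :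
    (∀ i, (Matrix.of fun s t => ∫ ω, d i ω s * d i ω t ∂μ)
        = A i - A i * Δ * A i) ∧
      ∑ i, (Matrix.of fun s t => ∫ ω, d i ω s * d i ω t ∂μ)
        = I₀ - ∑ i, A i * Δ * A i := by
  set B : ∀ l, Matrix (Fin p) (Fin (n l)) ℝ := fun l => (D l)ᵀ * (V l)⁻¹
  replace hd : ∀ i ω, d i ω = B i *ᵥ r i ω := hd
  have hBVB : ∀ l, B l * V l * (B l)ᵀ = A l := fun l => by
    rw [(hVsymm l).mul_inv_mul_mul_transpose_mul_inv ((V l).isUnit_iff_isUnit_det.mp (hVunit l)),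
      Matrix.transpose_transpose, hA]
  have hAsymm : ∀ l, (A l)ᵀ = A l := fun l => by
    simpa [hA] using ((hVsymm l).inv.transpose_mul_mul_same (D l)).eq
  have hΔsymm : Δᵀ = Δ := by
    rw [hΔ, Matrix.transpose_nonsing_inv, hI₀, Matrix.transpose_sum]
    simp only [hAsymm]
  have hΔA : Δ * ∑ l, A l = 1 :=
    hΔ ▸ hI₀ ▸ Matrix.nonsing_inv_mul _ (I₀.isUnit_iff_isUnit_det.mp hI₀unit)
  have hBH : ∀ i l, B i * H i l = A i * Δ * B l := fun i l => by
    simp only [B, hH, hA, Matrix.mul_assoc]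
  have hconj : ∀ (E : Matrix (Fin p) (Fin p) ℝ) l,
      E * B l * crossMoment μ (e l) (e l) * (E * B l)ᵀ = E * A l * Eᵀ := fun E l => by
    simp only [show crossMoment μ (e l) (e l) = V l from Matrix.ext (hcov l), ← hBVB,
      Matrix.transpose_mul, Matrix.mul_assoc]
  have key : ∀ i, crossMoment μ (d i) (d i) = A i - A i * Δ * A i := fun i => by
    have hd_sum : d i = fun ω => ∑ l, ((Pi.single i 1 l - A i * Δ) * B l) *ᵥ e l ω :=
      funext fun ω => by rw [hd, hr, mulVec_one_sub_mulVec_sub_sum_erase (hBH i) (e · ω)]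
    rw [hd_sum, crossMoment_sum_mulVec_sum_mulVec hindep hL2 hmean]
    simp only [hconj]
    exact sum_single_one_sub_mul_mul_transpose_eq_sub hAsymm hΔsymm hΔA i
  refine ⟨key, ?_⟩
  change ∑ i, crossMoment μ (d i) (d i) = _
  rw [Finset.sum_congr rfl fun i _ => key i, Finset.sum_sub_distrib, hI₀]

/-- exact finite-sample form of Proposition 3(i): under correctly
specified working covariance `E[e_i e_iᵀ] = V_i` and the first-order residual
expansion, the uncorrected score contributions `d_i = D_iᵀ V_i⁻¹ r_i` satisfy
`E[d_i d_iᵀ] = A_i − A_i Δ A_i` for every `i`, and hence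
`Σ_i E[d_i d_iᵀ] = I₀ − Σ_i A_i Δ A_i`. -/
theorem liang_zeger_middle_matrix_downward_bias
    {N p : ℕ} (n : Fin N → ℕ)
    (D : ∀ l, Matrix (Fin (n l)) (Fin p) ℝ)
    (V : ∀ l, Matrix (Fin (n l)) (Fin (n l)) ℝ)
    (hVsymm : ∀ l, (V l).IsSymm) (hVunit : ∀ l, IsUnit (V l))
    (A : Fin N → Matrix (Fin p) (Fin p) ℝ)
    (hA : ∀ l, A l = (D l)ᵀ * (V l)⁻¹ * D l)
    (I₀ : Matrix (Fin p) (Fin p) ℝ) (hI₀ : I₀ = ∑ l, A l)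
    (hI₀unit : IsUnit I₀)
    (Δ : Matrix (Fin p) (Fin p) ℝ) (hΔ : Δ = I₀⁻¹)
    (H : ∀ i l, Matrix (Fin (n i)) (Fin (n l)) ℝ)
    (hH : ∀ i l, H i l = D i * Δ * (D l)ᵀ * (V l)⁻¹)
    {Ω : Type*} [MeasurableSpace Ω] (μ : Measure Ω) [IsProbabilityMeasure μ]
    (e : ∀ i, Ω → Fin (n i) → ℝ)
    (hmeas : ∀ i, Measurable (e i))
    (hindep : iIndepFun e μ)
    (hL2 : ∀ i j, MemLp (fun ω => e i ω j) 2 μ)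
    (hmean : ∀ i j, ∫ ω, e i ω j ∂μ = 0)
    (hcov : ∀ i, ∀ j k, ∫ ω, e i ω j * e i ω k ∂μ = V i j k)
    (r : ∀ i, Ω → Fin (n i) → ℝ)
    (hr : ∀ i ω, r i ω =
      (1 - H i i) *ᵥ e i ω - ∑ l ∈ univ.erase i, H i l *ᵥ e l ω)
    (d : ∀ i, Ω → Fin p → ℝ)
    (hd : ∀ i ω, d i ω = ((D i)ᵀ * (V i)⁻¹) *ᵥ r i ω) :
    (∀ i, (Matrix.of fun s t => ∫ ω, d i ω s * d i ω t ∂μ)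
        = A i - A i * Δ * A i) ∧
      ∑ i, (Matrix.of fun s t => ∫ ω, d i ω s * d i ω t ∂μ)
        = I₀ - ∑ i, A i * Δ * A i :=
  liang_zeger_middle_matrix_downward_bias_general n D V hVsymm hVunit A hA I₀ hI₀ hI₀unit Δ hΔ H hH
    μ e hindep hL2 hmean hcov r hr d hd
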